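/- Let x be an adequate state (every crossing arc joins two distinct circles) and let X be an enhancement of x in which each A-zone contains at most one 0-labeled circle. Then over F₂ the A-trace tr(X) := ∑_{Y ∼_A X} Y is a cycle: d(tr(X)) = 0. -/

import Mathlib

attribute [local instance] Classical.propDecidable

/-- The local datum of the Khovanov differential at a crossing: changing an A-smoothing
to a B-smoothing either merges two circles `i ≠ j` of the source state (via the
relabeling `f`) or splits one circle into two circles `i ≠ j` of the target state
(via the relabeling `g`). -/
inductive KTrans (m n : ℕ) : Type
  | merge (f : Fin m → Fin n) (i j : Fin m) (hij : i ≠ j) (hf : f i = f j)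
  | split (g : Fin n → Fin m) (i j : Fin n) (hij : i ≠ j) (hg : g i = g j)

/-- The merge/split maps of the Frobenius algebra `R[q]/(q²)` acting on enhancements
(`true` = label 1 = `q`, `false` = label 0 = `1`):
merge: `q⊗q ↦ 0`, `1⊗q, q⊗1 ↦ q`, `1⊗1 ↦ 1`; split: `q ↦ q⊗q`, `1 ↦ q⊗1 + 1⊗q`. -/
noncomputable def ktransApply {R : Type*} [CommRing R] {m n : ℕ} :
    KTrans m n → (Fin m → Bool) → ((Fin n → Bool) →₀ R)
  | .merge f i j _ _, a =>
      if a i = true ∧ a j = true then 0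
      else Finsupp.single (fun l => decide (∃ k, f k = l ∧ a k = true)) 1
  | .split g i j _ _, a =>
      if a (g i) = true then Finsupp.single (a ∘ g) 1
      else Finsupp.single (Function.update (a ∘ g) i true) 1
        + Finsupp.single (Function.update (a ∘ g) j true) 1

/-- A combinatorial model of a link diagram for Viro-style Khovanov homology:
`c` crossings, states `s : Fin c → Bool` (`true` = A-smoothing), each state having
`circ s` circles, and for every A-smoothed crossing of every state the merge/split
transition datum to the state with that smoothing changed to B. -/
structure Diagram where
  c : ℕ
  circ : (Fin c → Bool) → ℕ
  trans : ∀ (s : Fin c → Bool) (t : Fin c), s t = true →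
    KTrans (circ s) (circ (Function.update s t false))

namespace Diagram

/-- Enhanced states: a state together with a `{0,1}`-labeling of its circles. -/
abbrev Enh (D : Diagram) : Type := Σ s : Fin D.c → Bool, Fin (D.circ s) → Bool

variable {R : Type*} [CommRing R]

/-- The Khovanov differential of an enhanced state:
`d X = ∑_t (-1)^{|A|_X^t} d_{c^t} X`, where `|A|_X^t` counts A-smoothings at crossings
of smaller index and `d_{c^t}` is the merge/split map (zero at B-smoothings). -/
noncomputable def dE (D : Diagram) (X : D.Enh) : D.Enh →₀ R :=
  ∑ t : Fin D.c,
    if h : X.1 t = true then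
      ((-1 : R) ^ (Finset.univ.filter fun r => r < t ∧ X.1 r = true).card) •
        Finsupp.mapDomain (fun b => (⟨Function.update X.1 t false, b⟩ : D.Enh))
          (ktransApply (D.trans X.1 t h) X.2)
    else 0

/-- The Khovanov differential on the chain module `C_R(D)`, the free `R`-module on
enhanced states. -/
noncomputable def d (D : Diagram) (Z : D.Enh →₀ R) : D.Enh →₀ R :=
  Z.sum fun e r => r • D.dE e

end Diagram

/-- Swap the labels on the two endpoint circles of a crossing arc. -/
def swapAt {n : ℕ} (e : Fin n × Fin n) (a : Fin n → Bool) : Fin n → Bool :=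
  Function.update (Function.update a e.1 (a e.2)) e.2 (a e.1)

/-- The equivalence relation `∼_A` (for `v = true`) resp. `∼_B` (for `v = false`) on
enhancements of a state, generated by swapping the labels on the two endpoint circles of
an arc of the corresponding type (`sm t = true` means an A-arc at crossing `t`, and
`ep t` gives the two circles the arc joins). -/
def RelLab {c n : ℕ} (sm : Fin c → Bool) (ep : Fin c → Fin n × Fin n) (v : Bool) :
    (Fin n → Bool) → (Fin n → Bool) → Prop :=
  Relation.ReflTransGen fun a b => ∃ t, sm t = v ∧ b = swapAt (ep t) a

/-- Connectivity of circles through arcs of a fixed type: `Conn sm ep true i j` says the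
circles `i`, `j` lie in the same A-zone (`v = false`: same B-zone). -/
def Conn {c n : ℕ} (sm : Fin c → Bool) (ep : Fin c → Fin n × Fin n) (v : Bool) :
    Fin n → Fin n → Prop :=
  Relation.ReflTransGen fun i j => ∃ t, sm t = v ∧ (ep t = (i, j) ∨ ep t = (j, i))

/-- Homogeneity of a state: no simple cycle of the state graph contains arcs of both
types (equivalently, every block of the state graph is all-A or all-B). -/
def Homog {c n : ℕ} (sm : Fin c → Bool) (ep : Fin c → Fin n × Fin n) : Prop :=
  ∀ (k : ℕ), 2 ≤ k → ∀ (te : ZMod k → Fin c) (ve : ZMod k → Fin n),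
    Function.Injective te → Function.Injective ve →
    (∀ i, ep (te i) = (ve i, ve (i + 1)) ∨ ep (te i) = (ve (i + 1), ve i)) →
    ∀ i j, sm (te i) = sm (te j)

/-!
Group the states of `tr(X)` by crossing. At a B-crossing there is no term; at an A-crossing `c`
joining the circles `i ≠ j` the differential merges `i` and `j`, and the merge only sees the
labels of `i` and `j` through their multiset. Swapping the labels of `i` and `j` keeps a state
in `[X]_A`, so the states with unequal labels at `i, j` pair up with equal `d_c`-image and cancel
over `F₂`; equal labels `1, 1` merge to `0`, and equal labels `0, 0` cannot occur because `i`
and `j` lie in one A-zone and every state of `[X]_A` still has at most one `0` per A-zone.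
-/

open Relation

lemma swapAt_apply {n : ℕ} (e : Fin n × Fin n) (a : Fin n → Bool) (k : Fin n) :
    swapAt e a k = a (Equiv.swap e.1 e.2 k) := by
  simp only [swapAt]
  rcases eq_or_ne k e.2 with rfl | h2
  · rw [Function.update_self, Equiv.swap_apply_right]
  rcases eq_or_ne k e.1 with rfl | h1
  · rw [Function.update_of_ne h2, Function.update_self, Equiv.swap_apply_left]
  · rw [Function.update_of_ne h2, Function.update_of_ne h1, Equiv.swap_apply_of_ne_of_ne h1 h2]

lemma swapAt_involutive {n : ℕ} (e : Fin n × Fin n) : Function.Involutive (swapAt e) :=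
  fun a => funext fun k => by simp only [swapAt_apply, Equiv.swap_apply_self]

section Zones

variable {c n : ℕ} {sm : Fin c → Bool} {ep : Fin c → Fin n × Fin n} {v : Bool}

lemma Conn.symm {i j : Fin n} (h : Conn sm ep v i j) : Conn sm ep v j i := by
  induction h with
  | refl => exact ReflTransGen.refl
  | tail _ hstep ih =>
    obtain ⟨t, ht, he⟩ := hstep
    exact ReflTransGen.head ⟨t, ht, he.symm⟩ ih

lemma conn_swap_apply {t : Fin c} (ht : sm t = v) (i : Fin n) :
    Conn sm ep v (Equiv.swap (ep t).1 (ep t).2 i) i := by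
  rcases eq_or_ne i (ep t).1 with rfl | h1
  · rw [Equiv.swap_apply_left]
    exact ReflTransGen.single ⟨t, ht, Or.inr rfl⟩
  rcases eq_or_ne i (ep t).2 with rfl | h2
  · rw [Equiv.swap_apply_right]
    exact ReflTransGen.single ⟨t, ht, Or.inl rfl⟩
  · rw [Equiv.swap_apply_of_ne_of_ne h1 h2]
    exact ReflTransGen.refl

variable (sm ep v) in
def AtMostOneZeroPerZone (a : Fin n → Bool) : Prop :=
  ∀ i j, Conn sm ep v i j → a i = false → a j = false → i = j

lemma AtMostOneZeroPerZone.swapAt {a : Fin n → Bool} (ha : AtMostOneZeroPerZone sm ep v a)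
    {t : Fin c} (ht : sm t = v) : AtMostOneZeroPerZone sm ep v (swapAt (ep t) a) := by
  intro i j hij hi hj
  rw [swapAt_apply] at hi hj
  have hconn := ((conn_swap_apply ht i).trans hij).trans (conn_swap_apply ht j).symm
  exact (Equiv.swap (ep t).1 (ep t).2).injective (ha _ _ hconn hi hj)

lemma AtMostOneZeroPerZone.of_relLab {a b : Fin n → Bool}
    (ha : AtMostOneZeroPerZone sm ep v a) (hab : RelLab sm ep v a b) :
    AtMostOneZeroPerZone sm ep v b := by
  induction hab with
  | refl => exact ha
  | tail _ hstep ih =>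
    obtain ⟨t, ht, rfl⟩ := hstep
    exact ih.swapAt ht

end Zones

section Merge

variable {R : Type*} [CommRing R] {m n : ℕ} (f : Fin m → Fin n) {i j : Fin m} (hne : i ≠ j)
  (hf : f i = f j)

lemma ktransApply_merge_swapAt (b : Fin m → Bool) :
    ktransApply (R := R) (.merge f i j hne hf) (swapAt (i, j) b) =
      ktransApply (.merge f i j hne hf) b := by
  have hfswap (k : Fin m) : f (Equiv.swap i j k) = f k := by
    rcases eq_or_ne k i with rfl | h1
    · rw [Equiv.swap_apply_left, hf]
    rcases eq_or_ne k j with rfl | h2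
    · rw [Equiv.swap_apply_right, hf]
    · rw [Equiv.swap_apply_of_ne_of_ne h1 h2]
  -- the merged labeling only depends on which circles of each fibre of `f` carry a `1`
  have hmerged : (fun l => decide (∃ k, f k = l ∧ swapAt (i, j) b k = true)) =
      fun l => decide (∃ k, f k = l ∧ b k = true) := by
    funext l
    simp only [swapAt_apply, decide_eq_decide]
    exact (Equiv.swap i j).exists_congr fun k => by rw [hfswap]
  have hi : swapAt (i, j) b i = b j := by rw [swapAt_apply, Equiv.swap_apply_left]
  have hj : swapAt (i, j) b j = b i := by rw [swapAt_apply, Equiv.swap_apply_right]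
  simp only [ktransApply]
  rw [hmerged, hi, hj]
  simp only [and_comm (a := b j = true)]

lemma sum_ktransApply_merge_eq_zero [CharP R 2] (S : Finset (Fin m → Bool))
    (hS : ∀ b ∈ S, swapAt (i, j) b ∈ S) (hzero : ∀ b ∈ S, b i = true ∨ b j = true) :
    ∑ b ∈ S, ktransApply (R := R) (.merge f i j hne hf) b = 0 := by
  refine Finset.sum_involution (fun b _ => swapAt (i, j) b)
    (fun b _ => by
      rw [ktransApply_merge_swapAt]
      ext
      rw [Finsupp.add_apply, CharTwo.add_self_eq_zero, Finsupp.zero_apply]) ?_ hS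
    (fun b _ => swapAt_involutive _ b)
  intro b hb hb0 hfix
  have hij : b i = b j := by simpa [swapAt_apply] using congrFun hfix j
  have hboth : b i = true ∧ b j = true := by
    rcases hzero b hb with h | h
    exacts [⟨h, hij.symm.trans h⟩, ⟨hij.trans h, h⟩]
  exact hb0 (by simp only [ktransApply, if_pos hboth])

end Merge

namespace Diagram

variable {R : Type*} [CommRing R] (D : Diagram)

lemma d_sum_single {ι : Type*} (S : Finset ι) (g : ι → D.Enh) :
    D.d (∑ x ∈ S, Finsupp.single (g x) (1 : R)) = ∑ x ∈ S, D.dE (g x) := by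
  rw [d, ← Finsupp.sum_finsetSum_index (h := fun e r => r • D.dE e) (fun _ => zero_smul R _)
    fun _ _ _ => add_smul _ _ _]
  exact Finset.sum_congr rfl fun x _ => by
    rw [Finsupp.sum_single_index (h := fun e r => r • D.dE e) (zero_smul R _), one_smul]

-- the sign of each term of `dE` depends on the state only, not on the labeling
lemma sum_dE_eq_zero {s : Fin D.c → Bool} (S : Finset (Fin (D.circ s) → Bool))
    (h : ∀ t (ht : s t = true), ∑ b ∈ S, ktransApply (R := R) (D.trans s t ht) b = 0) :
    ∑ b ∈ S, D.dE (R := R) ⟨s, b⟩ = 0 := by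
  simp only [dE]
  rw [Finset.sum_comm]
  refine Finset.sum_eq_zero fun t _ => ?_
  by_cases ht : s t = true
  · simp only [dif_pos ht]
    rw [← Finset.smul_sum, ← Finsupp.mapDomain_finsetSum, h t ht, Finsupp.mapDomain_zero,
      smul_zero]
  · simp only [dif_neg ht, Finset.sum_const_zero]

end Diagram

/-- Over `F₂`, for an adequate state `x` (state `s0` of the diagram `D`, with each
A-arc `t` joining the two distinct circles `ep t`, matching the merge transition of the
differential) and an enhancement `X` with at most one 0-labeled circle in each A-zone,
the A-trace `tr(X) = ∑_{Y ∼_A X} Y` is a cycle: `d(tr X) = 0`. -/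
theorem trace_is_cycle_F2 (D : Diagram) (s0 : Fin D.c → Bool)
    (ep : Fin D.c → Fin (D.circ s0) × Fin (D.circ s0))
    (hadq : ∀ t, (ep t).1 ≠ (ep t).2)
    (hcompatA : ∀ (t : Fin D.c) (h : s0 t = true),
      ∃ f hne hf, D.trans s0 t h = KTrans.merge f (ep t).1 (ep t).2 hne hf)
    (X : Fin (D.circ s0) → Bool)
    (hzoneA : ∀ i j, Conn s0 ep true i j → X i = false → X j = false → i = j) :
    D.d (R := ZMod 2)
      (∑ b ∈ Finset.univ.filter (fun b => RelLab s0 ep true X b),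
        Finsupp.single (⟨s0, b⟩ : D.Enh) 1) = 0 := by
  set S := Finset.univ.filter (fun b => RelLab s0 ep true X b)
  rw [D.d_sum_single]
  refine D.sum_dE_eq_zero S fun t ht => ?_
  obtain ⟨f, hne, hf, htrans⟩ := hcompatA t ht
  rw [htrans]
  refine sum_ktransApply_merge_eq_zero f hne hf S (fun b hb => Finset.mem_filter.2
    ⟨Finset.mem_univ _, (Finset.mem_filter.1 hb).2.tail ⟨t, ht, rfl⟩⟩) ?_
  intro b hb
  have hzone := AtMostOneZeroPerZone.of_relLab hzoneA (Finset.mem_filter.1 hb).2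
  by_contra! hboth
  simp only [ne_eq, Bool.not_eq_true] at hboth
  exact hadq t (hzone _ _ (ReflTransGen.single ⟨t, ht, Or.inl rfl⟩) hboth.1 hboth.2)
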